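/- arXiv:1603.03284 — 4 statements merged into one kernel-verified Lean document; each statement's English description precedes it below -/
import Mathlib

section
/- Let n be a natural number and let G be a pure subgroup of ℤ^n. Then G, viewed as a set of n-tuples of integers, is definable without parameters by a first-order formula (indeed a quantifier-free one) in the first-order language whose only symbols are a constant symbol 0 and a binary function symbol +, interpreted in the standard way on ℤ. In particular, every pure subgroup of ℤ^n is definable in Presburger arithmetic. -/
open FirstOrder

/-- The first-order language whose only symbols are a constant symbol `0` and a
binary function symbol `+`. -/
def addLanguage : Language where
  Functions := fun n =>
    match n with
    | 0 => Unit
    | 2 => Unit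
    | _ => Empty
  Relations := fun _ => Empty

/-- The standard interpretation of the language `{0, +}` on `ℤ`. -/
instance addLanguage.intStructure : addLanguage.Structure ℤ where
  funMap {n} f x :=
    match n, f, x with
    | 0, _, _ => 0
    | 2, _, x => x 0 + x 1
  RelMap {n} r _ := Empty.elim r

/-
The quotient `ℤⁿ ⧸ G` is a finitely generated torsion-free abelian group, hence free, say `≅ ℤᵐ`.
So `G` is the kernel of a linear map `ℤⁿ → ℤᵐ`, i.e. the solution set of a homogeneous integer
linear system `A x = 0`. Each equation `∑ aⱼ xⱼ = 0` becomes an equality of `{0, +}`-terms once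
the terms with negative coefficients are moved to the other side, and `G` is defined by the
conjunction of these atomic formulas.
-/

open FirstOrder.Language Matrix

namespace FirstOrder.Language.BoundedFormula

theorem IsQF.iInf {L : Language} {α β : Type*} {n : ℕ} [Finite β] {f : β → L.BoundedFormula α n}
    (hf : ∀ b, (f b).IsQF) : (BoundedFormula.iInf f).IsQF := by
  suffices ∀ l : List β, (List.foldr (· ⊓ ·) ⊤ (l.map f)).IsQF from this _
  intro l
  induction l with
  | nil => exact IsQF.top
  | cons b l ih => exact (hf b).inf ih

end FirstOrder.Language.BoundedFormula

namespace addLanguage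

variable {α : Type*}

instance : Zero (addLanguage.Term α) := ⟨Term.func (l := 0) () ![]⟩

instance : Add (addLanguage.Term α) := ⟨fun t u => Term.func (l := 2) () ![t, u]⟩

@[simp] theorem realize_zero (v : α → ℤ) : (0 : addLanguage.Term α).realize v = 0 := rfl

@[simp] theorem realize_add (v : α → ℤ) (t u : addLanguage.Term α) :
    (t + u).realize v = t.realize v + u.realize v := rfl

@[simp] theorem realize_listSum (v : α → ℤ) (l : List (addLanguage.Term α)) :
    l.sum.realize v = (l.map (Term.realize v)).sum := by
  induction l with
  | nil => rfl
  | cons t l ih => simp [ih]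

def linearTerm {n : ℕ} (c : Fin n → ℕ) : addLanguage.Term (Fin n) :=
  ((List.finRange n).flatMap fun j => List.replicate (c j) (Term.var j)).sum

theorem realize_linearTerm {n : ℕ} (c : Fin n → ℕ) (x : Fin n → ℤ) :
    (linearTerm c).realize x = ∑ j, (c j : ℤ) * x j := by
  simp [linearTerm, List.flatMap_def, List.sum_flatten, Function.comp_def, Fin.sum_univ_def]

def linearEquation {n : ℕ} (a : Fin n → ℤ) : addLanguage.Formula (Fin n) :=
  (linearTerm fun j => (a j).toNat).equal (linearTerm fun j => (-a j).toNat)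

theorem isQF_linearEquation {n : ℕ} (a : Fin n → ℤ) : (linearEquation a).IsQF :=
  (BoundedFormula.IsAtomic.equal _ _).isQF

theorem realize_linearEquation {n : ℕ} (a : Fin n → ℤ) (x : Fin n → ℤ) :
    (linearEquation a).Realize x ↔ a ⬝ᵥ x = 0 := by
  simp only [linearEquation, Formula.realize_equal, realize_linearTerm]
  rw [dotProduct, ← sub_eq_zero, ← Finset.sum_sub_distrib]
  simp only [← sub_mul, Int.toNat_sub_toNat_neg]

noncomputable def linearSystem {m n : ℕ} (A : Matrix (Fin m) (Fin n) ℤ) :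
    addLanguage.Formula (Fin n) :=
  Formula.iInf fun i => linearEquation (A i)

theorem isQF_linearSystem {m n : ℕ} (A : Matrix (Fin m) (Fin n) ℤ) : (linearSystem A).IsQF :=
  BoundedFormula.IsQF.iInf fun i => isQF_linearEquation (A i)

theorem realize_linearSystem {m n : ℕ} (A : Matrix (Fin m) (Fin n) ℤ) (x : Fin n → ℤ) :
    (linearSystem A).Realize x ↔ A *ᵥ x = 0 := by
  simp only [linearSystem, Formula.realize_iInf, realize_linearEquation, funext_iff]
  rfl

end addLanguage

theorem Submodule.isTorsionFree_quotient {R M : Type*} [Ring R] [Nontrivial R] [AddCommGroup M]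
    [Module R M] (S : Submodule R M) (hS : ∀ r : R, r ≠ 0 → ∀ x : M, r • x ∈ S → x ∈ S) :
    Module.IsTorsionFree R (M ⧸ S) := by
  refine .of_smul_eq_zero fun r y hry => ?_
  obtain ⟨x, rfl⟩ := S.mkQ_surjective y
  rw [← map_smul, mkQ_apply, Quotient.mk_eq_zero] at hry
  rw [or_iff_not_imp_left, mkQ_apply, Quotient.mk_eq_zero]
  exact fun hr => hS r hr x hry

theorem Submodule.exists_linearMap_ker_eq {R M : Type*} [CommRing R] [IsDomain R]
    [IsPrincipalIdealRing R] [AddCommGroup M] [Module R M] [Module.Finite R M] (S : Submodule R M)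
    [Module.IsTorsionFree R (M ⧸ S)] : ∃ (m : ℕ) (f : M →ₗ[R] Fin m → R), LinearMap.ker f = S := by
  obtain ⟨m, b⟩ := Module.basisOfFiniteTypeTorsionFree' (R := R) (M := M ⧸ S)
  refine ⟨m, b.equivFun.toLinearMap ∘ₗ S.mkQ, ?_⟩
  rw [LinearMap.ker_comp, LinearEquiv.ker, Submodule.comap_bot, Submodule.ker_mkQ]

/-- Every pure subgroup `G` of `ℤ^n` is definable, without parameters and by a
quantifier-free first-order formula, in the language whose only symbols are `0` and `+`,
interpreted in the standard way on `ℤ`.  In particular every pure subgroup of `ℤ^n` is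
definable in Presburger arithmetic. -/
theorem pure_subgroup_definable (n : ℕ) (G : AddSubgroup (Fin n → ℤ))
    (hpure : ∀ c : ℤ, c ≠ 0 → ∀ x : Fin n → ℤ, c • x ∈ G → x ∈ G) :
    ∃ φ : addLanguage.Formula (Fin n),
      φ.IsQF ∧ ∀ x : Fin n → ℤ, x ∈ G ↔ φ.Realize x := by
  let S := AddSubgroup.toIntSubmodule G
  have : Module.IsTorsionFree ℤ ((Fin n → ℤ) ⧸ S) := S.isTorsionFree_quotient hpure
  obtain ⟨m, f, hf⟩ := S.exists_linearMap_ker_eq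
  refine ⟨addLanguage.linearSystem (LinearMap.toMatrix' f), addLanguage.isQF_linearSystem _,
    fun x => ?_⟩
  rw [addLanguage.realize_linearSystem, LinearMap.toMatrix'_mulVec, ← LinearMap.mem_ker, hf]
  rfl
end

section
/- There is a finite subset Ω ⊆ ℤ⁶ such that for every x ∈ ℤ⁶ with χ(x) = 1 there exists y ∈ Ω with χ(x − y) = 0; that is, every root of χ lies in the union of finitely many cosets of the subgroup of radical vectors. -/
/-- The Euler bilinear form of the canonical tubular algebra `C(2,2,2,2)` on `ℤ⁶`,
with coordinates `(x₀, x₁, x₂, x₃, x₄, x_∞)` indexed by `0,1,2,3,4,5`. -/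
def eulerForm (x y : Fin 6 → ℤ) : ℤ :=
  (x 0 * y 0 + x 1 * y 1 + x 2 * y 2 + x 3 * y 3 + x 4 * y 4 + x 5 * y 5)
    - y 0 * (x 1 + x 2 + x 3 + x 4) - x 5 * (y 1 + y 2 + y 3 + y 4) + 2 * x 5 * y 0

/-- The associated quadratic form `χ(x) = ⟨x,x⟩`. -/
def chi (x : Fin 6 → ℤ) : ℤ := eulerForm x x

/-- The box `{-1,0,1}⁶` as a finite set. -/
noncomputable def box : Finset (Fin 6 → ℤ) :=
  Finset.image (fun v : Fin 6 → Fin 3 => fun i => (v i : ℤ) - 1) Finset.univ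

lemma mem_box (y : Fin 6 → ℤ) (h : ∀ i, -1 ≤ y i ∧ y i ≤ 1) : y ∈ box := by
  rw [box, Finset.mem_image]
  refine ⟨fun i => ⟨(y i + 1).toNat, by have := h i; omega⟩, Finset.mem_univ _, ?_⟩
  funext i
  have := h i
  have h1 : ((y i + 1).toNat : ℤ) = y i + 1 := Int.toNat_of_nonneg (by omega)
  simp [h1]

lemma aux_sq (u : ℤ) (h : u ^ 2 ≤ 4) : -2 ≤ u ∧ u ≤ 2 :=
  ⟨by nlinarith [sq_nonneg (u + 2)], by nlinarith [sq_nonneg (u - 2)]⟩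

/-- There is a finite subset `Ω ⊆ ℤ⁶` such that every root of `χ` (i.e. every
`x` with `χ(x) = 1`) differs from some element of `Ω` by a radical vector: there is `y ∈ Ω`
with `χ(x − y) = 0`. -/
theorem roots_lie_in_finitely_many_radical_cosets :
    ∃ Ω : Finset (Fin 6 → ℤ),
      ∀ x : Fin 6 → ℤ, chi x = 1 → ∃ y ∈ Ω, chi (x - y) = 0 := by
  refine ⟨box, fun x hx => ?_⟩
  set t : ℤ := x 0 + x 5 with ht
  have key : (2*x 1 - t)^2 + (2*x 2 - t)^2 + (2*x 3 - t)^2 + (2*x 4 - t)^2 = 4 := by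
    have h4 : (2*x 1 - t)^2 + (2*x 2 - t)^2 + (2*x 3 - t)^2 + (2*x 4 - t)^2 = 4 * chi x := by
      unfold chi eulerForm; ring
    rw [h4, hx]; norm_num
  have hb : ∀ i ∈ ({1, 2, 3, 4} : Finset (Fin 6)), -2 ≤ 2*x i - t ∧ 2*x i - t ≤ 2 := by
    intro i hi
    apply aux_sq
    fin_cases hi <;>
      nlinarith [sq_nonneg (2*x 1 - t), sq_nonneg (2*x 2 - t), sq_nonneg (2*x 3 - t),
        sq_nonneg (2*x 4 - t)]
  obtain ⟨c, r, hc, hr0, hr1⟩ : ∃ c r : ℤ, t = 2*c + r ∧ 0 ≤ r ∧ r ≤ 1 :=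
    ⟨t / 2, t % 2, by omega, by omega, by omega⟩
  refine ⟨fun i => if i.val = 0 then 0 else if i.val = 5 then r else x i - c,
    mem_box _ ?_, ?_⟩
  · intro i
    by_cases h0 : i.val = 0
    · simp [h0]
    by_cases h5 : i.val = 5
    · simp [h0, h5]; omega
    · simp only [h0, h5, if_false]
      have him : i ∈ ({1, 2, 3, 4} : Finset (Fin 6)) := by
        have h6 := i.isLt
        simp only [Finset.mem_insert, Finset.mem_singleton, Fin.ext_iff]
        omega
      have := hb i him
      omega
  · have e0 : (fun i : Fin 6 => if i.val = 0 then (0:ℤ) else if i.val = 5 then r else x i - c) 0 = 0 := by norm_num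
    have e1 : (fun i : Fin 6 => if i.val = 0 then (0:ℤ) else if i.val = 5 then r else x i - c) 1 = x 1 - c := by norm_num
    have e2 : (fun i : Fin 6 => if i.val = 0 then (0:ℤ) else if i.val = 5 then r else x i - c) 2 = x 2 - c := by norm_num
    have e3 : (fun i : Fin 6 => if i.val = 0 then (0:ℤ) else if i.val = 5 then r else x i - c) 3 = x 3 - c := rfl
    have e4 : (fun i : Fin 6 => if i.val = 0 then (0:ℤ) else if i.val = 5 then r else x i - c) 4 = x 4 - c := rfl
    have e5 : (fun i : Fin 6 => if i.val = 0 then (0:ℤ) else if i.val = 5 then r else x i - c) 5 = r := rfl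
    simp only [chi, eulerForm, Pi.sub_apply, e0, e1, e2, e3, e4, e5]
    linear_combination (x 0 + x 5 - r - 2*c) * hc
end

section
/- The set R = { x ∈ ℤ⁶ : χ(x) = 0 } of radical vectors is an additive subgroup of ℤ⁶; it contains h₀ = (2,1,1,1,1,0) and h_∞ = (0,1,1,1,1,2); and the subgroup of R generated by h₀ and h_∞ has finite index in R (i.e. the quotient group R / (ℤh₀ + ℤh_∞) is finite). -/
/-- The canonical radical vector `h₀ = (2,1,1,1,1,0)`. -/
def h0 : Fin 6 → ℤ := ![2, 1, 1, 1, 1, 0]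

/-- The canonical radical vector `h_∞ = (0,1,1,1,1,2)`. -/
def hinf : Fin 6 → ℤ := ![0, 1, 1, 1, 1, 2]

instance AddSubgroup.fg_of_isNoetherian {G : Type*} [AddCommGroup G] [IsNoetherian ℤ G]
    (K : AddSubgroup G) : AddGroup.FG K :=
  Module.Finite.iff_addGroup_fg.mp (inferInstance : Module.Finite ℤ K.toIntSubmodule)

theorem AddSubgroup.relIndex_ne_zero_of_nsmul_mem {G : Type*} [AddCommGroup G]
    {H K : AddSubgroup G} [AddGroup.FG K] {n : ℕ} (hn : n ≠ 0) (h : ∀ x ∈ K, n • x ∈ H) :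
    H.relIndex K ≠ 0 := by
  have hfg : AddGroup.FG (K ⧸ H.addSubgroupOf K) :=
    AddGroup.fg_of_surjective (QuotientAddGroup.mk'_surjective _)
  have htors : IsAddTorsion (K ⧸ H.addSubgroupOf K) := by
    intro y
    induction y using QuotientAddGroup.induction_on with | H x =>
    refine isOfFinAddOrder_iff_nsmul_eq_zero.mpr ⟨n, hn.bot_lt, ?_⟩
    rw [← QuotientAddGroup.mk_nsmul, QuotientAddGroup.eq_zero_iff]
    exact h x x.2
  have := AddCommGroup.finite_of_fg_isAddTorsion _ htors
  exact AddSubgroup.index_ne_zero_of_finite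

theorem four_mul_chi (x : Fin 6 → ℤ) :
    4 * chi x = ∑ i ∈ ({1, 2, 3, 4} : Finset (Fin 6)), (2 * x i - x 0 - x 5) ^ 2 := by
  simp only [chi, eulerForm, Finset.mem_insert, Finset.mem_singleton, Fin.reduceEq, or_self,
    not_false_eq_true, Finset.sum_insert, Finset.sum_singleton]
  ring

theorem chi_eq_zero_iff (x : Fin 6 → ℤ) :
    chi x = 0 ↔ 2 * x 1 = x 0 + x 5 ∧ 2 * x 2 = x 0 + x 5 ∧
      2 * x 3 = x 0 + x 5 ∧ 2 * x 4 = x 0 + x 5 := by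
  rw [← mul_right_inj' (four_ne_zero (α := ℤ)), mul_zero, four_mul_chi,
    Finset.sum_eq_zero_iff_of_nonneg fun _ _ => sq_nonneg _]
  simp only [Finset.mem_insert, Finset.mem_singleton, forall_eq_or_imp, forall_eq,
    pow_eq_zero_iff two_ne_zero, sub_sub, sub_eq_zero]

def radical : AddSubgroup (Fin 6 → ℤ) where
  carrier := {x | chi x = 0}
  add_mem' {a b} ha hb := by
    simp only [Set.mem_ofPred_eq, chi_eq_zero_iff, Pi.add_apply] at *; omega
  zero_mem' := rfl
  neg_mem' {a} ha := by
    simp only [Set.mem_ofPred_eq, chi_eq_zero_iff, Pi.neg_apply] at *; omega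

theorem two_nsmul_eq_of_chi_eq_zero {x : Fin 6 → ℤ} (hx : chi x = 0) :
    2 • x = x 0 • h0 + x 5 • hinf := by
  obtain ⟨h1, h2, h3, h4⟩ := (chi_eq_zero_iff x).mp hx
  funext i
  fin_cases i <;>
    simp only [h0, hinf, Fin.zero_eta, Fin.mk_one, Fin.reduceFinMk, Fin.isValue, Pi.add_apply,
      Pi.smul_apply, smul_eq_mul, nsmul_eq_mul, Nat.cast_ofNat, Matrix.cons_val] <;> omega

/-- The set `R = { x ∈ ℤ⁶ : χ(x) = 0 }` of radical vectors is an additive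
subgroup of `ℤ⁶`; it contains `h₀ = (2,1,1,1,1,0)` and `h_∞ = (0,1,1,1,1,2)`; and the
subgroup generated by `h₀` and `h_∞` has finite index in `R`. -/
theorem radical_vectors_subgroup_with_finite_index_sub :
    ∃ R : AddSubgroup (Fin 6 → ℤ),
      (R : Set (Fin 6 → ℤ)) = { x | chi x = 0 } ∧
      h0 ∈ R ∧ hinf ∈ R ∧
      (AddSubgroup.closure {h0, hinf}).relIndex R ≠ 0 := by
  refine ⟨radical, rfl, rfl, rfl, ?_⟩
  refine AddSubgroup.relIndex_ne_zero_of_nsmul_mem two_ne_zero fun x hx => ?_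
  rw [two_nsmul_eq_of_chi_eq_zero hx]
  exact add_mem (zsmul_mem (AddSubgroup.subset_closure (by simp)) _)
    (zsmul_mem (AddSubgroup.subset_closure (by simp)) _)
end

section
/- Let (V, M, Γ) be an object of C(X) such that M ≠ 0 and such that the only idempotent endomorphisms of (V, M, Γ) in C(X) are 0 and the identity (in particular, this holds if (V,M,Γ) is indecomposable). Then Γ : V → Hom_A(X,M) is injective. Equivalently: if ker Γ ≠ 0 and M ≠ 0, then (V, M, Γ) admits an idempotent endomorphism in C(X) different from 0 and from the identity. -/
/-!
Choose a complement `W` of `ker Γ` in `V`. The projection of `V` onto `W` along `ker Γ` commutes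
with `Γ`, so together with the identity of `M` it is an idempotent endomorphism of `(V, M, Γ)`.
It is not zero because `M ≠ 0`, hence it is the identity, and its kernel `ker Γ` vanishes.
-/

open CategoryTheory CategoryTheory.Limits Opposite ZeroObject

/-- The functor `Hom_A(X, −) : Mod-A ⥤ Mod-k`, sending an `A`-module `M` to the
`k`-vector space `Hom_A(X, M)`. -/
noncomputable def homFromX (k : Type) [Field k] (A : Type) [Ring A] [Algebra k A]
    (X : ModuleCat A) : ModuleCat A ⥤ ModuleCat k :=
  (linearCoyoneda k (ModuleCat A)).obj (op X)

/-- The comma category `C(X)` whose objects are triples `(V, M, Γ)` with `V` a `k`-vector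
space, `M` an `A`-module and `Γ : V → Hom_A(X, M)` `k`-linear. -/
noncomputable abbrev CatCX (k : Type) [Field k] (A : Type) [Ring A] [Algebra k A]
    (X : ModuleCat A) :=
  Comma (𝟭 (ModuleCat k)) (homFromX k A X)

/-- The functor `F₀ : Mod-A ⥤ C(X)`, `M ↦ (0, M, 0)`. -/
noncomputable def F0 (k : Type) [Field k] (A : Type) [Ring A] [Algebra k A]
    (X : ModuleCat A) : ModuleCat A ⥤ CatCX k A X where
  obj M := { left := 0, right := M, hom := 0 }
  map f := { left := 𝟙 0, right := f, w := by simp }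

/-- The functor `F₁ : Mod-A ⥤ C(X)`, `M ↦ (Hom_A(X,M), M, id)`. -/
noncomputable def F1 (k : Type) [Field k] (A : Type) [Ring A] [Algebra k A]
    (X : ModuleCat A) : ModuleCat A ⥤ CatCX k A X where
  obj M := { left := (homFromX k A X).obj M, right := M, hom := 𝟙 _ }
  map f := { left := (homFromX k A X).map f, right := f, w := by simp }

/-- The projection functor `r : C(X) ⥤ Mod-A`, `(V, M, Γ) ↦ M`. -/
noncomputable def projCX (k : Type) [Field k] (A : Type) [Ring A] [Algebra k A]
    (X : ModuleCat A) : CatCX k A X ⥤ ModuleCat A :=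
  Comma.snd (𝟭 (ModuleCat k)) (homFromX k A X)

theorem LinearMap.exists_isIdempotentElem_ker_eq_comp_eq {K V U : Type*} [DivisionRing K]
    [AddCommGroup V] [Module K V] [AddCommGroup U] [Module K U] (f : V →ₗ[K] U) :
    ∃ p : V →ₗ[K] V, IsIdempotentElem p ∧ ker p = ker f ∧ f ∘ₗ p = f := by
  obtain ⟨W, hW⟩ := (ker f).exists_isCompl
  refine ⟨W.projection (ker f) hW.symm, Submodule.isIdempotentElem_projection _,
    Submodule.ker_projection _, LinearMap.ext fun v ↦ ?_⟩
  have hv : v - W.projection (ker f) hW.symm v ∈ ker f := by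
    rw [← Submodule.projection_eq_self_sub_projection]
    exact Submodule.projection_apply_mem _ _
  rw [mem_ker, map_sub, sub_eq_zero] at hv
  exact hv.symm

universe v₁ v₂ v₃ u₁ u₂ u₃

namespace CategoryTheory.Comma

variable {A : Type u₁} [Category.{v₁} A] {B : Type u₂} [Category.{v₂} B]
  {T : Type u₃} [Category.{v₃} T] {L : A ⥤ T} {R : B ⥤ T}

@[simps]
def endoOfLeft (Y : Comma L R) (p : Y.left ⟶ Y.left) (hp : L.map p ≫ Y.hom = Y.hom) :
    Y ⟶ Y where
  left := p
  right := 𝟙 Y.right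

lemma endoOfLeft_comp_self (Y : Comma L R) {p : Y.left ⟶ Y.left}
    (hp : L.map p ≫ Y.hom = Y.hom) (hpp : p ≫ p = p) :
    endoOfLeft Y p hp ≫ endoOfLeft Y p hp = endoOfLeft Y p hp :=
  hom_ext _ _ (by simp [hpp]) (by simp)

end CategoryTheory.Comma

/-- If `(V, M, Γ)` is an object of `C(X)` with `M ≠ 0` whose only idempotent
endomorphisms are `0` and the identity (e.g. if it is indecomposable), then
`Γ : V → Hom_A(X, M)` is injective. -/
theorem structure_map_injective_of_no_nontrivial_idempotents (k : Type) [Field k] (A : Type)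
    [Ring A] [Algebra k A] (X : ModuleCat A) (Y : CatCX k A X)
    (hM : ∃ m : Y.right, m ≠ 0)
    (hidem : ∀ e : Y ⟶ Y, e ≫ e = e → (e.left = 0 ∧ e.right = 0) ∨ e = 𝟙 Y) :
    Function.Injective Y.hom := by
  obtain ⟨p, hpp, hker, hcomp⟩ := Y.hom.hom.exists_isIdempotentElem_ker_eq_comp_eq
  have hp : (𝟭 _).map (ModuleCat.ofHom p) ≫ Y.hom = Y.hom := ModuleCat.hom_ext hcomp
  rcases hidem _ (Comma.endoOfLeft_comp_self Y hp (ModuleCat.hom_ext hpp)) with ⟨-, hzero⟩ | hid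
  · obtain ⟨m, hm⟩ := hM
    have : Subsingleton Y.right :=
      ModuleCat.isZero_iff_subsingleton.mp ((IsZero.iff_id_eq_zero _).mpr hzero)
    exact (hm (Subsingleton.elim m 0)).elim
  · have hp_id : p = LinearMap.id := congr(ModuleCat.Hom.hom $(congr(CommaMorphism.left $hid)))
    rw [← LinearMap.ker_eq_bot (f := Y.hom.hom), ← hker, hp_id, LinearMap.ker_id]
end
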